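/- (Proposition 1, second inequality) Let X be a nonempty finite set and P a probability mass function on classifiers g : X → Bool. Then for every labeling h : X → Bool, AS ≥ 2·ACC(h) − 1; i.e., the agreement score is at least twice the test accuracy of any labeling minus one. -/

import Mathlib

open scoped BigOperators

/-- Test accuracy of labeling `h` under classifier distribution `P`. -/
noncomputable def ACC {X : Type*} [Fintype X] [DecidableEq X]
    (P : PMF (X → Bool)) (h : X → Bool) : ℝ :=
  ∑ g : X → Bool, (P g).toReal *
    ((1 / (Fintype.card X : ℝ)) * ∑ x : X, if g x = h x then (1 : ℝ) else 0)

/-- Agreement score: expected agreement of two independent classifiers from `P`. -/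
noncomputable def AS {X : Type*} [Fintype X] [DecidableEq X]
    (P : PMF (X → Bool)) : ℝ :=
  ∑ g₁ : X → Bool, ∑ g₂ : X → Bool, (P g₁).toReal * (P g₂).toReal *
    ((1 / (Fintype.card X : ℝ)) * ∑ x : X, if g₁ x = g₂ x then (1 : ℝ) else 0)

/-- The probability that a classifier drawn from `P` labels `x` with `c`. -/
noncomputable def probAt {X : Type*} [Fintype X] [DecidableEq X]
    (P : PMF (X → Bool)) (x : X) (c : Bool) : ℝ :=
  ∑ g : X → Bool, if g x = c then (P g).toReal else 0

lemma sum_weight {X : Type*} [Fintype X] [DecidableEq X]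
    (P : PMF (X → Bool)) (x : X) (f : Bool → ℝ) :
    ∑ g : X → Bool, (P g).toReal * f (g x)
      = probAt P x true * f true + probAt P x false * f false := by
  unfold probAt
  rw [Finset.sum_mul, Finset.sum_mul, ← Finset.sum_add_distrib]
  refine Finset.sum_congr rfl fun g _ => ?_
  cases hg : g x <;> simp [hg]

lemma probAt_nonneg {X : Type*} [Fintype X] [DecidableEq X]
    (P : PMF (X → Bool)) (x : X) (c : Bool) : 0 ≤ probAt P x c := by
  refine Finset.sum_nonneg fun g _ => ?_
  split <;> positivity

lemma probAt_add {X : Type*} [Fintype X] [DecidableEq X]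
    (P : PMF (X → Bool)) (x : X) :
    probAt P x true + probAt P x false = 1 := by
  have h1 : ∑ g : X → Bool, (P g).toReal = 1 := by
    have := P.tsum_coe
    rw [tsum_fintype] at this
    rw [← ENNReal.toReal_sum (fun g _ => P.apply_ne_top g), this, ENNReal.toReal_one]
  unfold probAt
  rw [← Finset.sum_add_distrib, ← h1]
  refine Finset.sum_congr rfl fun g _ => ?_
  cases hg : g x <;> simp [hg]

lemma ACC_eq {X : Type*} [Fintype X] [DecidableEq X]
    (P : PMF (X → Bool)) (h : X → Bool) :
    ACC P h = (1 / (Fintype.card X : ℝ)) * ∑ x : X, probAt P x (h x) := by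
  unfold ACC
  simp_rw [Finset.mul_sum]
  rw [Finset.sum_comm]
  refine Finset.sum_congr rfl fun x _ => ?_
  have h2 := sum_weight P x (fun b => if b = h x then (1 : ℝ) else 0)
  simp_rw [show ∀ a b c : ℝ, a * (b * c) = b * (a * c) from fun a b c => by ring,
    ← Finset.mul_sum, h2]
  cases hx : h x <;> simp

lemma AS_eq {X : Type*} [Fintype X] [DecidableEq X]
    (P : PMF (X → Bool)) :
    AS P = (1 / (Fintype.card X : ℝ)) *
      ∑ x : X, (probAt P x true ^ 2 + probAt P x false ^ 2) := by
  unfold AS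
  simp_rw [Finset.mul_sum]
  rw [Finset.sum_congr rfl (fun g₁ _ => Finset.sum_comm), Finset.sum_comm]
  refine Finset.sum_congr rfl fun x _ => ?_
  simp_rw [show ∀ a b c d : ℝ, a * b * (c * d) = c * (a * (b * d)) from
    fun a b c d => by ring, ← Finset.mul_sum]
  congr 1
  have h2 : ∀ g₁ : X → Bool,
      ∑ g₂ : X → Bool, (P g₂).toReal * (if g₁ x = g₂ x then (1 : ℝ) else 0)
        = probAt P x true * (if g₁ x = true then (1 : ℝ) else 0)
          + probAt P x false * (if g₁ x = false then (1 : ℝ) else 0) := fun g₁ =>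
    sum_weight P x (fun b => if g₁ x = b then (1 : ℝ) else 0)
  simp_rw [h2]
  have h3 := sum_weight P x (fun b =>
    probAt P x true * (if b = true then (1 : ℝ) else 0)
      + probAt P x false * (if b = false then (1 : ℝ) else 0))
  simp only at h3
  rw [h3]
  simp
  ring

/-- `hmv` is a majority-vote labeling for `P`. -/
def IsMajorityVote {X : Type*} [Fintype X] [DecidableEq X]
    (P : PMF (X → Bool)) (hmv : X → Bool) : Prop :=
  ∀ (x : X) (c : Bool), probAt P x c ≤ probAt P x (hmv x)

/-- Proposition 1, second inequality: `AS ≥ 2·ACC(h) − 1` for any labeling `h`. -/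
theorem agreement_score_ge_two_accuracy_sub_one
    {X : Type*} [Fintype X] [DecidableEq X] [Nonempty X]
    (P : PMF (X → Bool)) (h : X → Bool) :
    2 * ACC P h - 1 ≤ AS P := by
  rw [ACC_eq, AS_eq]
  have hn : (0 : ℝ) < (Fintype.card X : ℝ) := by
    exact_mod_cast Fintype.card_pos
  have key : ∀ x : X, 2 * probAt P x (h x) - 1
      ≤ probAt P x true ^ 2 + probAt P x false ^ 2 := by
    intro x
    have hadd := probAt_add P x
    have h1 := probAt_nonneg P x true
    have h2 := probAt_nonneg P x false
    cases hx : h x <;> nlinarith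
  have step : ∑ x : X, (2 * probAt P x (h x) - 1)
      ≤ ∑ x : X, (probAt P x true ^ 2 + probAt P x false ^ 2) :=
    Finset.sum_le_sum fun x _ => key x
  have expand : ∑ x : X, (2 * probAt P x (h x) - 1)
      = 2 * ∑ x : X, probAt P x (h x) - (Fintype.card X : ℝ) := by
    rw [Finset.sum_sub_distrib, ← Finset.mul_sum, Finset.sum_const, Finset.card_univ,
      nsmul_eq_mul, mul_one]
  have := mul_le_mul_of_nonneg_left step (by positivity : (0:ℝ) ≤ 1 / (Fintype.card X : ℝ))
  rw [expand] at this
  have hfield : (1 / (Fintype.card X : ℝ)) *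
      (2 * ∑ x : X, probAt P x (h x) - (Fintype.card X : ℝ))
      = 2 * ((1 / (Fintype.card X : ℝ)) * ∑ x : X, probAt P x (h x)) - 1 := by
    field_simp
  rw [hfield] at this
  exact this
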